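/- arXiv:2506.11971 — 6 statements merged into one kernel-verified Lean document; each statement's English description precedes it below -/
import Mathlib

section
/- Let F be a nonempty subset of R^n, let {Q_k} be symmetric matrices with Q_k ⪰ aI for some a > 0 and ‖Q_k‖ ≤ b < ∞ for all k, and let {x_k} ⊆ R^n satisfy ‖x_{k+1} - y‖²_{Q_{k+1}} ≤ (1+ψ_k)‖x_k - y‖²_{Q_k} + ε_k for all k ≥ 0 and all y ∈ F, where {ψ_k}, {ε_k} are nonnegative summable sequences. Then for every y ∈ F and every k ≥ 0, ‖x_k - y‖² ≤ (1/a)·(∏_{j=0}^∞ (1+ψ_j))·(‖x_0 - y‖²_{Q_0} + ∑_{i=0}^∞ ε_i), and in particular {x_k} is bounded. -/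
open scoped RealInnerProductSpace

section aux
open Matrix

private lemma vmqf_inner_eq {n : ℕ} (M : Matrix (Fin n) (Fin n) ℝ) (v : EuclideanSpace ℝ (Fin n)) :
    ⟪v, Matrix.toEuclideanLin M v⟫ =
      dotProduct (WithLp.equiv 2 ((Fin n) → ℝ) v) (M *ᵥ (WithLp.equiv 2 ((Fin n) → ℝ) v)) := by
  simp [PiLp.inner_apply, Matrix.toEuclideanLin_apply, dotProduct, RCLike.inner_apply, mul_comm]

private lemma vmqf_self_eq {n : ℕ} (v : EuclideanSpace ℝ (Fin n)) :
    dotProduct (WithLp.equiv 2 ((Fin n) → ℝ) v) (WithLp.equiv 2 ((Fin n) → ℝ) v) = ‖v‖^2 := by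
  rw [← real_inner_self_eq_norm_sq]
  simp [PiLp.inner_apply, dotProduct, RCLike.inner_apply, EuclideanSpace.real_norm_sq_eq, ← sq]

private lemma vmqf_coercive {n : ℕ} {M : Matrix (Fin n) (Fin n) ℝ} {a : ℝ}
    (h : (M - a • 1).PosSemidef) (v : EuclideanSpace ℝ (Fin n)) :
    a * ‖v‖ ^ 2 ≤ ⟪v, Matrix.toEuclideanLin M v⟫ := by
  have h2 := h.dotProduct_mulVec_nonneg (WithLp.equiv 2 ((Fin n) → ℝ) v)
  set u := WithLp.equiv 2 ((Fin n) → ℝ) v with hu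
  have hst : star u = u := rfl
  rw [hst, Matrix.sub_mulVec, dotProduct_sub, Matrix.smul_mulVec,
    Matrix.one_mulVec, dotProduct_smul, smul_eq_mul] at h2
  rw [vmqf_inner_eq]
  have := vmqf_self_eq v
  rw [← hu] at this
  rw [this] at h2
  linarith

private lemma vmqf_one_le_prod {ψ : ℕ → ℝ} (h : ∀ j, 0 ≤ ψ j) (s : Finset ℕ) :
    (1:ℝ) ≤ ∏ i ∈ s, (1 + ψ i) := by
  calc (1:ℝ) = ∏ _i ∈ s, (1:ℝ) := by simp
    _ ≤ ∏ i ∈ s, (1 + ψ i) :=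
        Finset.prod_le_prod (by intros; norm_num) (fun i _ => by linarith [h i])

end aux

/-- Variable metric quasi-Fejér monotone sequences satisfy the uniform bound
‖x_k - y‖² ≤ (1/a) ∏ (1+ψ_j) (‖x_0-y‖²_{Q_0} + ∑ ε_i), hence are bounded. -/
theorem var_metric_quasi_fejer_bound {n : ℕ}
    (F : Set (EuclideanSpace ℝ (Fin n))) (hF : F.Nonempty)
    (Q : ℕ → Matrix (Fin n) (Fin n) ℝ) (a b : ℝ) (ha : 0 < a)
    (hsymm : ∀ k, (Q k).IsSymm)
    (hQa : ∀ k, (Q k - a • 1).PosSemidef)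
    (hQb : ∀ k, ‖Matrix.toEuclideanCLM (𝕜 := ℝ) (Q k)‖ ≤ b)
    (x : ℕ → EuclideanSpace ℝ (Fin n))
    (ψ ε : ℕ → ℝ) (hψ0 : ∀ k, 0 ≤ ψ k) (hψ : Summable ψ)
    (hε0 : ∀ k, 0 ≤ ε k) (hε : Summable ε)
    (hineq : ∀ y ∈ F, ∀ k : ℕ,
      ⟪x (k + 1) - y, Matrix.toEuclideanLin (Q (k + 1)) (x (k + 1) - y)⟫ ≤
        (1 + ψ k) * ⟪x k - y, Matrix.toEuclideanLin (Q k) (x k - y)⟫ + ε k) :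
    (∀ y ∈ F, ∀ k : ℕ,
      ‖x k - y‖ ^ 2 ≤
        (1 / a) * (∏' j : ℕ, (1 + ψ j)) *
          (⟪x 0 - y, Matrix.toEuclideanLin (Q 0) (x 0 - y)⟫ + ∑' i : ℕ, ε i)) ∧
    ∃ M : ℝ, ∀ k : ℕ, ‖x k‖ ≤ M := by
  have h1ψ : ∀ j, (1:ℝ) ≤ 1 + ψ j := fun j => by linarith [hψ0 j]
  -- multipliability of ∏ (1 + ψ j)
  have hbexp : ∀ s : Finset ℕ, ∏ i ∈ s, (1 + ψ i) ≤ Real.exp (∑' i, ψ i) := by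
    intro s
    calc ∏ i ∈ s, (1 + ψ i) ≤ ∏ i ∈ s, Real.exp (ψ i) :=
          Finset.prod_le_prod (fun i _ => by linarith [hψ0 i])
            (fun i _ => by linarith [Real.add_one_le_exp (ψ i)])
      _ = Real.exp (∑ i ∈ s, ψ i) := (Real.exp_sum s ψ).symm
      _ ≤ Real.exp (∑' i, ψ i) :=
          Real.exp_le_exp.2 (Summable.sum_le_tsum s (fun i _ => hψ0 i) hψ)
  have hmono : Monotone (fun s : Finset ℕ => ∏ i ∈ s, (1 + ψ i)) := by
    intro s t hst
    simp only
    rw [← Finset.prod_sdiff hst]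
    nth_rewrite 1 [← one_mul (∏ i ∈ s, (1 + ψ i))]
    exact mul_le_mul_of_nonneg_right (vmqf_one_le_prod hψ0 _)
      (le_trans zero_le_one (vmqf_one_le_prod hψ0 _))
  have hbdd : BddAbove (Set.range (fun s : Finset ℕ => ∏ i ∈ s, (1 + ψ i))) :=
    ⟨Real.exp (∑' i, ψ i), by rintro z ⟨s, rfl⟩; exact hbexp s⟩
  have hhp : HasProd (fun j => 1 + ψ j) (⨆ s : Finset ℕ, ∏ i ∈ s, (1 + ψ i)) :=
    tendsto_atTop_ciSup hmono hbdd
  have htp : ∏' j, (1 + ψ j) = ⨆ s : Finset ℕ, ∏ i ∈ s, (1 + ψ i) := hhp.tprod_eq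
  have hPle' : ∀ s : Finset ℕ, ∏ i ∈ s, (1 + ψ i) ≤ ∏' j, (1 + ψ j) := by
    intro s; rw [htp]; exact le_ciSup hbdd s
  have hProd1 : (1:ℝ) ≤ ∏' j, (1 + ψ j) := by simpa using hPle' ∅
  have hεt : 0 ≤ ∑' i, ε i := tsum_nonneg hε0
  have key : ∀ y ∈ F, ∀ k : ℕ,
      ‖x k - y‖ ^ 2 ≤
        (1 / a) * (∏' j : ℕ, (1 + ψ j)) *
          (⟪x 0 - y, Matrix.toEuclideanLin (Q 0) (x 0 - y)⟫ + ∑' i : ℕ, ε i) := by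
    intro y hy k
    set V : ℕ → ℝ := fun k => ⟪x k - y, Matrix.toEuclideanLin (Q k) (x k - y)⟫ with hV
    have hVnn : ∀ k, 0 ≤ V k := fun k =>
      le_trans (by positivity) (vmqf_coercive (hQa k) (x k - y))
    set P : ℕ → ℝ := fun k => ∏ j ∈ Finset.range k, (1 + ψ j) with hP
    set S : ℕ → ℝ := fun k => ∑ i ∈ Finset.range k, ε i with hS
    have hP1 : ∀ k, 1 ≤ P k := fun k => vmqf_one_le_prod hψ0 _
    have hstep : ∀ k, V k ≤ P k * (V 0 + S k) := by
      intro k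
      induction k with
      | zero => simp [hP, hS]
      | succ k ih =>
        calc V (k+1) ≤ (1 + ψ k) * V k + ε k := hineq y hy k
          _ ≤ (1 + ψ k) * (P k * (V 0 + S k)) + ε k := by
              have := mul_le_mul_of_nonneg_left ih (by linarith [hψ0 k] : (0:ℝ) ≤ 1 + ψ k)
              linarith
          _ = P (k+1) * (V 0 + S k) + ε k := by
              simp only [hP, Finset.prod_range_succ]; ring
          _ ≤ P (k+1) * (V 0 + S (k+1)) := by
              simp only [hS, Finset.sum_range_succ]
              have h1 := hP1 (k+1)
              have h2 := hε0 k
              nlinarith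
    have hPle : ∀ k, P k ≤ ∏' j, (1 + ψ j) := fun k => hPle' (Finset.range k)
    have hSle : ∀ k, S k ≤ ∑' i, ε i := fun k =>
      Summable.sum_le_tsum _ (fun i _ => hε0 i) hε
    have hVk : V k ≤ (∏' j, (1 + ψ j)) * (V 0 + ∑' i, ε i) := by
      calc V k ≤ P k * (V 0 + S k) := hstep k
        _ ≤ (∏' j, (1 + ψ j)) * (V 0 + ∑' i, ε i) := by
            apply mul_le_mul (hPle k) (by linarith [hSle k]) _ (by linarith [hProd1])
            have : 0 ≤ S k := Finset.sum_nonneg (fun i _ => hε0 i)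
            linarith [hVnn 0]
    have hco := vmqf_coercive (hQa k) (x k - y)
    rw [div_mul_eq_mul_div, div_mul_eq_mul_div, one_mul, le_div_iff₀ ha]
    calc ‖x k - y‖ ^ 2 * a = a * ‖x k - y‖ ^ 2 := by ring
      _ ≤ V k := hco
      _ ≤ (∏' j, (1 + ψ j)) * (V 0 + ∑' i, ε i) := hVk
  refine ⟨key, ?_⟩
  obtain ⟨y₀, hy₀⟩ := hF
  set C : ℝ := (1 / a) * (∏' j : ℕ, (1 + ψ j)) *
      (⟪x 0 - y₀, Matrix.toEuclideanLin (Q 0) (x 0 - y₀)⟫ + ∑' i : ℕ, ε i) with hC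
  refine ⟨Real.sqrt C + ‖y₀‖, fun k => ?_⟩
  have h1 : ‖x k - y₀‖ ≤ Real.sqrt C := by
    have h2 := key y₀ hy₀ k
    have := Real.sqrt_le_sqrt h2
    rwa [Real.sqrt_sq (norm_nonneg _)] at this
  calc ‖x k‖ = ‖(x k - y₀) + y₀‖ := by rw [sub_add_cancel]
    _ ≤ ‖x k - y₀‖ + ‖y₀‖ := norm_add_le _ _
    _ ≤ Real.sqrt C + ‖y₀‖ := by linarith
end

section
/- Let F be a nonempty subset of R^n and let {x_k} ⊆ R^n be variable metric quasi-Fejér monotone with respect to F relative to a sequence of symmetric matrices {Q_k} satisfying Q_k ⪰ aI (a > 0) and ‖Q_k‖ ≤ b < ∞. If x* ∈ F is a limit point of {x_k}, then the whole sequence {x_k} converges to x*. -/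
open scoped RealInnerProductSpace

private lemma vmqf_rec_bound (d ψ ε : ℕ → ℝ) (hψ0 : ∀ k, 0 ≤ ψ k) (hε0 : ∀ k, 0 ≤ ε k)
    (hrec : ∀ k, d (k + 1) ≤ (1 + ψ k) * d k + ε k) (N : ℕ) :
    ∀ m, N ≤ m →
      d m ≤ (∏ i ∈ Finset.Ico N m, (1 + ψ i)) * (d N + ∑ i ∈ Finset.Ico N m, ε i) := by
  intro m hm
  induction m, hm using Nat.le_induction with
  | base => simp
  | succ m hm ih =>
    have hP1 : (1:ℝ) ≤ ∏ i ∈ Finset.Ico N m, (1 + ψ i) := by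
      have := Finset.prod_le_prod (s := Finset.Ico N m) (f := fun _ => (1:ℝ))
        (g := fun i => 1 + ψ i) (fun i _ => zero_le_one) (fun i _ => by simpa using hψ0 i)
      simpa using this
    rw [Finset.prod_Ico_succ_top hm, Finset.sum_Ico_succ_top hm]
    have h1 := hrec m
    have h2 : (1 + ψ m) * d m ≤
        (1 + ψ m) * ((∏ i ∈ Finset.Ico N m, (1 + ψ i)) * (d N + ∑ i ∈ Finset.Ico N m, ε i)) :=
      mul_le_mul_of_nonneg_left ih (by linarith [hψ0 m])
    have hP0 : (0:ℝ) ≤ ∏ i ∈ Finset.Ico N m, (1 + ψ i) := le_trans zero_le_one hP1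
    have t1 : 0 ≤ ε m * ((∏ i ∈ Finset.Ico N m, (1 + ψ i)) - 1) :=
      mul_nonneg (hε0 m) (by linarith)
    have t2 : 0 ≤ (∏ i ∈ Finset.Ico N m, (1 + ψ i)) * ψ m * ε m :=
      mul_nonneg (mul_nonneg hP0 (hψ0 m)) (hε0 m)
    nlinarith [t1, t2]

private lemma vmqf_prod_le_exp (ψ : ℕ → ℝ) (hψ0 : ∀ k, 0 ≤ ψ k) (hψ : Summable ψ) (N m : ℕ) :
    ∏ i ∈ Finset.Ico N m, (1 + ψ i) ≤ Real.exp (∑' k, ψ k) :=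
  calc ∏ i ∈ Finset.Ico N m, (1 + ψ i) ≤ ∏ i ∈ Finset.Ico N m, Real.exp (ψ i) :=
      Finset.prod_le_prod (fun i _ => by linarith [hψ0 i])
        (fun i _ => by linarith [Real.add_one_le_exp (ψ i)])
    _ = Real.exp (∑ i ∈ Finset.Ico N m, ψ i) := (Real.exp_sum _ _).symm
    _ ≤ Real.exp (∑' k, ψ k) :=
      Real.exp_le_exp.mpr (Summable.sum_le_tsum _ (fun i _ => hψ0 i) hψ)

/-- A variable metric quasi-Fejér monotone sequence with a limit point in F
converges to that limit point. -/
theorem var_metric_quasi_fejer_conv {n : ℕ}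
    (F : Set (EuclideanSpace ℝ (Fin n))) (hF : F.Nonempty)
    (Q : ℕ → Matrix (Fin n) (Fin n) ℝ) (a b : ℝ) (ha : 0 < a)
    (hsymm : ∀ k, (Q k).IsSymm)
    (hQa : ∀ k, (Q k - a • 1).PosSemidef)
    (hQb : ∀ k, ‖Matrix.toEuclideanCLM (𝕜 := ℝ) (Q k)‖ ≤ b)
    (x : ℕ → EuclideanSpace ℝ (Fin n))
    (ψ ε : ℕ → ℝ) (hψ0 : ∀ k, 0 ≤ ψ k) (hψ : Summable ψ)
    (hε0 : ∀ k, 0 ≤ ε k) (hε : Summable ε)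
    (hineq : ∀ y ∈ F, ∀ k : ℕ,
      ⟪x (k + 1) - y, Matrix.toEuclideanLin (Q (k + 1)) (x (k + 1) - y)⟫ ≤
        (1 + ψ k) * ⟪x k - y, Matrix.toEuclideanLin (Q k) (x k - y)⟫ + ε k)
    (xstar : EuclideanSpace ℝ (Fin n)) (hxstar : xstar ∈ F)
    (φ : ℕ → ℕ) (hφ : StrictMono φ)
    (hsub : Filter.Tendsto (fun j => x (φ j)) Filter.atTop (nhds xstar)) :
    Filter.Tendsto x Filter.atTop (nhds xstar) := by
  classical
  set d : ℕ → ℝ := fun k => ⟪x k - xstar, Matrix.toEuclideanLin (Q k) (x k - xstar)⟫ with hd_def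
  -- lower bound via positive semidefiniteness
  have hd_low : ∀ k, a * ‖x k - xstar‖ ^ 2 ≤ d k := by
    intro k
    set v := x k - xstar
    have h2 := (hQa k).dotProduct_mulVec_nonneg (WithLp.equiv 2 _ v)
    simp only [Matrix.sub_mulVec, Matrix.smul_mulVec, Matrix.one_mulVec,
      dotProduct_sub, dotProduct_smul, star_trivial, smul_eq_mul] at h2
    have hv : dotProduct (WithLp.equiv 2 _ v) (WithLp.equiv 2 _ v) = ‖v‖ ^ 2 := by
      rw [← real_inner_self_eq_norm_sq, EuclideanSpace.inner_eq_star_dotProduct]; simp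
    rw [hv] at h2
    have : d k = dotProduct (WithLp.equiv 2 _ v) ((Q k).mulVec (WithLp.equiv 2 _ v)) := by
      show ⟪v, Matrix.toEuclideanLin (Q k) v⟫ = _
      rw [EuclideanSpace.inner_eq_star_dotProduct, Matrix.ofLp_toEuclideanLin_apply]
      simp; exact dotProduct_comm _ _
    rw [this]
    linarith
  -- upper bound via operator norm
  have hd_up : ∀ k, d k ≤ b * ‖x k - xstar‖ ^ 2 := by
    intro k
    set v := x k - xstar
    have he : Matrix.toEuclideanLin (Q k) v = Matrix.toEuclideanCLM (𝕜 := ℝ) (Q k) v := by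
      rw [← Matrix.coe_toEuclideanCLM_eq_toEuclideanLin]; rfl
    have hb' := hQb k
    calc d k = ⟪v, Matrix.toEuclideanCLM (𝕜 := ℝ) (Q k) v⟫ := by
          show ⟪v, Matrix.toEuclideanLin (Q k) v⟫ = _
          rw [he]
      _ ≤ ‖v‖ * ‖Matrix.toEuclideanCLM (𝕜 := ℝ) (Q k) v‖ := real_inner_le_norm _ _
      _ ≤ b * ‖v‖ ^ 2 := by
          have h1 := (Matrix.toEuclideanCLM (𝕜 := ℝ) (Q k)).le_opNorm v
          have h2 := norm_nonneg v
          have h3 := norm_nonneg (Matrix.toEuclideanCLM (𝕜 := ℝ) (Q k) v)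
          nlinarith
  have hd0 : ∀ k, 0 ≤ d k := fun k =>
    le_trans (mul_nonneg ha.le (sq_nonneg _)) (hd_low k)
  have hb0 : (0:ℝ) ≤ b := le_trans (norm_nonneg _) (hQb 0)
  have hrec : ∀ k, d (k + 1) ≤ (1 + ψ k) * d k + ε k := hineq xstar hxstar
  -- the subsequence of d tends to 0
  have hnsub : Filter.Tendsto (fun j => ‖x (φ j) - xstar‖) Filter.atTop (nhds 0) := by
    have := hsub
    rw [tendsto_iff_dist_tendsto_zero] at this
    simpa [dist_eq_norm] using this
  have hdsub : Filter.Tendsto (fun j => d (φ j)) Filter.atTop (nhds 0) := by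
    have hupper : Filter.Tendsto (fun j => b * ‖x (φ j) - xstar‖ ^ 2) Filter.atTop (nhds 0) := by
      have := (hnsub.mul hnsub).const_mul b
      simpa [sq] using this
    exact squeeze_zero (fun j => hd0 _) (fun j => hd_up _) hupper
  -- d tends to 0
  set C : ℝ := Real.exp (∑' k, ψ k) with hC_def
  have hC1 : (1:ℝ) ≤ C := by
    rw [hC_def, ← Real.exp_zero]
    exact Real.exp_le_exp.mpr (tsum_nonneg hψ0)
  have hC0 : (0:ℝ) < C := lt_of_lt_of_le one_pos hC1
  set S : ℕ → ℝ := fun N => ∑ i ∈ Finset.range N, ε i with hS_def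
  set T : ℝ := ∑' k, ε k with hT_def
  have hST : Filter.Tendsto S Filter.atTop (nhds T) := hε.hasSum.tendsto_sum_nat
  have hSmono : Monotone S := fun p q hpq =>
    Finset.sum_le_sum_of_subset_of_nonneg (Finset.range_subset_range.mpr hpq) (fun i _ _ => hε0 i)
  have hkey : ∀ N m, N ≤ m → d m ≤ C * (d N + (T - S N)) := by
    intro N m hm
    have h1 := vmqf_rec_bound d ψ ε hψ0 hε0 hrec N m hm
    have h2 := vmqf_prod_le_exp ψ hψ0 hψ N m
    have hE0 : 0 ≤ ∑ i ∈ Finset.Ico N m, ε i := Finset.sum_nonneg fun i _ => hε0 i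
    have hE : ∑ i ∈ Finset.Ico N m, ε i ≤ T - S N := by
      have : S N + ∑ i ∈ Finset.Ico N m, ε i = S m := by
        rw [hS_def]
        exact Finset.sum_range_add_sum_Ico ε hm
      have hSm : S m ≤ T := Summable.sum_le_tsum _ (fun i _ => hε0 i) hε
      linarith
    have hdN := hd0 N
    calc d m ≤ (∏ i ∈ Finset.Ico N m, (1 + ψ i)) * (d N + ∑ i ∈ Finset.Ico N m, ε i) := h1
      _ ≤ C * (d N + ∑ i ∈ Finset.Ico N m, ε i) :=
          mul_le_mul_of_nonneg_right h2 (by linarith)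
      _ ≤ C * (d N + (T - S N)) := mul_le_mul_of_nonneg_left (by linarith) hC0.le
  have hd_tendsto : Filter.Tendsto d Filter.atTop (nhds 0) := by
    rw [Metric.tendsto_atTop]
    intro δ hδ
    have hδ' : 0 < δ / (3 * C) := by positivity
    -- tail of ε small
    have htail : Filter.Tendsto (fun N => T - S N) Filter.atTop (nhds 0) := by
      have := (tendsto_const_nhds (x := T) (f := Filter.atTop (α := ℕ))).sub hST
      simpa using this
    obtain ⟨N0, hN0⟩ := (Metric.tendsto_atTop.mp htail) (δ / (3 * C)) hδ'
    obtain ⟨J, hJ⟩ := (Metric.tendsto_atTop.mp hdsub) (δ / (3 * C)) hδ'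
    set j := max J N0
    have hφj : N0 ≤ φ j := le_trans (le_max_right J N0) hφ.le_apply
    have hdφj : d (φ j) < δ / (3 * C) := by
      have := hJ j (le_max_left J N0)
      rwa [Real.dist_eq, sub_zero, abs_of_nonneg (hd0 _)] at this
    have hTS : T - S (φ j) < δ / (3 * C) := by
      have h1 := hN0 N0 le_rfl
      rw [Real.dist_eq, abs_sub_comm] at h1
      have h2 : S N0 ≤ S (φ j) := hSmono hφj
      have h3 := abs_lt.mp h1
      linarith [h3.1, h3.2, h2]
    refine ⟨φ j, fun m hm => ?_⟩
    have := hkey (φ j) m hm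
    rw [Real.dist_eq, sub_zero, abs_of_nonneg (hd0 m)]
    have hC3 : C * (δ / (3 * C)) = δ / 3 := by field_simp
    calc d m ≤ C * (d (φ j) + (T - S (φ j))) := this
      _ < C * (δ / (3 * C) + δ / (3 * C)) := by
          apply mul_lt_mul_of_pos_left _ hC0
          linarith
      _ = 2 * (δ / 3) := by field_simp; ring
      _ < δ := by linarith
  -- conclude
  rw [tendsto_iff_dist_tendsto_zero]
  simp only [dist_eq_norm]
  have hupper : Filter.Tendsto (fun m => Real.sqrt (d m / a)) Filter.atTop (nhds 0) := by
    have h1 : Filter.Tendsto (fun m => d m / a) Filter.atTop (nhds 0) := by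
      simpa using hd_tendsto.div_const a
    have := (Real.continuous_sqrt.tendsto 0).comp h1
    simpa [Function.comp_def] using this
  apply squeeze_zero (fun m => norm_nonneg _) _ hupper
  intro m
  have hle : ‖x m - xstar‖ ^ 2 ≤ d m / a := by
    rw [le_div_iff₀ ha]
    linarith [hd_low m]
  calc ‖x m - xstar‖ = Real.sqrt (‖x m - xstar‖ ^ 2) := (Real.sqrt_sq (norm_nonneg _)).symm
    _ ≤ Real.sqrt (d m / a) := Real.sqrt_le_sqrt hle
end

section
/- Let F ⊆ R^n be nonempty and let {Q_k} be symmetric matrices with Q_k ⪰ aI (a > 0) and ‖Q_k‖ ≤ b < ∞. Suppose {x_k} ⊆ R^n satisfies, for all y ∈ F and all k ≥ 0, ‖x_{k+1} - y‖²_{Q_{k+1}} ≤ (1+ψ_k)‖x_k - y‖²_{Q_k} + θ_k‖x_k - y‖ + ε_k, where {ψ_k}, {θ_k}, {ε_k} are nonnegative summable sequences. Then there exist nonnegative summable sequences {ψ̃_k}, {ε̃_k} such that ‖x_{k+1} - y‖²_{Q_{k+1}} ≤ (1+ψ̃_k)‖x_k - y‖²_{Q_k} + ε̃_k for all y ∈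 F and k ≥ 0; i.e., {x_k} is variable metric quasi-Fejér monotone with respect to F relative to {Q_k}. -/
open scoped RealInnerProductSpace

lemma inner_toEuclideanLin_eq_dot {n : ℕ} (M : Matrix (Fin n) (Fin n) ℝ)
    (v : EuclideanSpace ℝ (Fin n)) :
    ⟪v, Matrix.toEuclideanLin M v⟫ =
      dotProduct (WithLp.equiv 2 _ v) (M.mulVec $ WithLp.equiv 2 _ v) := by
  simp [Matrix.toEuclideanLin_apply, PiLp.inner_apply, dotProduct, mul_comm]

lemma quad_lower_bound {n : ℕ} (M : Matrix (Fin n) (Fin n) ℝ) (a : ℝ)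
    (hM : (M - a • 1).PosSemidef) (v : EuclideanSpace ℝ (Fin n)) :
    a * ‖v‖ ^ 2 ≤ ⟪v, Matrix.toEuclideanLin M v⟫ := by
  have h := hM.re_dotProduct_nonneg (WithLp.equiv 2 _ v)
  rw [inner_toEuclideanLin_eq_dot]
  have hnorm : ‖v‖ ^ 2 = dotProduct (WithLp.equiv 2 _ v) (WithLp.equiv 2 _ v) := by
    rw [← real_inner_self_eq_norm_sq]
    simp only [PiLp.inner_apply, dotProduct, WithLp.equiv_apply, RCLike.inner_apply, conj_trivial]
  simp only [RCLike.star_def, starRingEnd_apply, star_trivial, RCLike.re_to_real,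
    Matrix.sub_mulVec, dotProduct_sub, Matrix.smul_mulVec, Matrix.one_mulVec,
    dotProduct_smul, smul_eq_mul, sub_nonneg] at h
  rw [hnorm]
  exact h

/-- A sequence satisfying the perturbed quasi-Fejér inequality with a summable linear
term is variable metric quasi-Fejér monotone. -/
theorem perturbed_implies_var_metric_quasi_fejer {n : ℕ}
    (F : Set (EuclideanSpace ℝ (Fin n))) (hF : F.Nonempty)
    (Q : ℕ → Matrix (Fin n) (Fin n) ℝ) (a b : ℝ) (ha : 0 < a)
    (hsymm : ∀ k, (Q k).IsSymm)
    (hQa : ∀ k, (Q k - a • 1).PosSemidef)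
    (hQb : ∀ k, ‖Matrix.toEuclideanCLM (𝕜 := ℝ) (Q k)‖ ≤ b)
    (x : ℕ → EuclideanSpace ℝ (Fin n))
    (ψ θ ε : ℕ → ℝ) (hψ0 : ∀ k, 0 ≤ ψ k) (hψ : Summable ψ)
    (hθ0 : ∀ k, 0 ≤ θ k) (hθ : Summable θ)
    (hε0 : ∀ k, 0 ≤ ε k) (hε : Summable ε)
    (hineq : ∀ y ∈ F, ∀ k : ℕ,
      ⟪x (k + 1) - y, Matrix.toEuclideanLin (Q (k + 1)) (x (k + 1) - y)⟫ ≤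
        (1 + ψ k) * ⟪x k - y, Matrix.toEuclideanLin (Q k) (x k - y)⟫ +
          θ k * ‖x k - y‖ + ε k) :
    ∃ ψ' ε' : ℕ → ℝ, (∀ k, 0 ≤ ψ' k) ∧ Summable ψ' ∧ (∀ k, 0 ≤ ε' k) ∧ Summable ε' ∧
      ∀ y ∈ F, ∀ k : ℕ,
        ⟪x (k + 1) - y, Matrix.toEuclideanLin (Q (k + 1)) (x (k + 1) - y)⟫ ≤
          (1 + ψ' k) * ⟪x k - y, Matrix.toEuclideanLin (Q k) (x k - y)⟫ + ε' k := by
  refine ⟨fun k => ψ k + θ k / a, fun k => ε k + θ k, ?_, ?_, ?_, ?_, ?_⟩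
  · intro k; simp only []; have := div_nonneg (hθ0 k) ha.le; linarith [hψ0 k]
  · exact hψ.add (hθ.div_const a)
  · intro k; simp only []; linarith [hε0 k, hθ0 k]
  · exact hε.add hθ
  · intro y hy k
    have key := hineq y hy k
    set v := x k - y
    set qv := ⟪v, Matrix.toEuclideanLin (Q k) v⟫ with hqv
    have hquad : a * ‖v‖ ^ 2 ≤ qv := quad_lower_bound _ a (hQa k) v
    have hqv0 : 0 ≤ qv := le_trans (by positivity) hquad
    have hlin : θ k * ‖v‖ ≤ θ k / a * qv + θ k := by
      rcases le_or_gt 1 ‖v‖ with h1 | h1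
      · have hv2 : ‖v‖ ≤ ‖v‖ ^ 2 := by nlinarith
        have : θ k * ‖v‖ ≤ θ k * ‖v‖ ^ 2 := mul_le_mul_of_nonneg_left hv2 (hθ0 k)
        have h2 : θ k * ‖v‖ ^ 2 ≤ θ k / a * qv := by
          rw [div_mul_eq_mul_div, le_div_iff₀ ha]
          nlinarith [hθ0 k]
        linarith [hθ0 k]
      · have : θ k * ‖v‖ ≤ θ k := by nlinarith [hθ0 k, norm_nonneg v]
        have h2 : 0 ≤ θ k / a * qv := mul_nonneg (div_nonneg (hθ0 k) ha.le) hqv0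
        linarith
    calc ⟪x (k + 1) - y, Matrix.toEuclideanLin (Q (k + 1)) (x (k + 1) - y)⟫
        ≤ (1 + ψ k) * qv + θ k * ‖v‖ + ε k := key
      _ ≤ (1 + ψ k) * qv + (θ k / a * qv + θ k) + ε k := by linarith
      _ = (1 + (ψ k + θ k / a)) * qv + (ε k + θ k) := by ring
end

section
/- Let Q be a symmetric matrix with Q ⪰ aI (a > 0), let g, s ∈ R^n, σ ≥ 0, r ≥ 3, and define m(s) = gᵀs + (1/2)sᵀQs + (σ/r)‖s‖^r, so that ∇m(s) = g + Qs + σ‖s‖^{r-2}s. If ‖∇m(s)‖ ≤ τ‖s‖ with 0 ≤ τ and a > 2τ, then m(0) - m(s) ≥ (a/2 - τ)‖s‖² > 0 whenever s ≠ 0. -/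
open scoped RealInnerProductSpace

theorem quad_lower {n : ℕ} (Q : Matrix (Fin n) (Fin n) ℝ) (a : ℝ)
    (hQa : (Q - a • 1).PosSemidef)
    (s : EuclideanSpace ℝ (Fin n)) : a * ‖s‖^2 ≤ ⟪s, Matrix.toEuclideanLin Q s⟫ := by
  have h := hQa.dotProduct_mulVec_nonneg (WithLp.ofLp s)
  have hss : ⟪s, s⟫ = ‖s‖^2 := real_inner_self_eq_norm_sq s
  simp only [Matrix.sub_mulVec, Matrix.smul_mulVec, Matrix.one_mulVec,
    dotProduct, Pi.sub_apply, Pi.smul_apply, smul_eq_mul, Pi.star_apply,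
    star_trivial, mul_sub, Finset.sum_sub_distrib] at h
  rw [PiLp.inner_apply] at hss ⊢
  simp only [RCLike.inner_apply, starRingEnd_apply, star_trivial] at hss ⊢
  have : ∑ i, s i * (a * s i) = a * ‖s‖^2 := by
    rw [← hss]; rw [Finset.mul_sum]; congr 1; ext i; ring
  rw [this] at h
  have : ∀ i, (Matrix.toEuclideanLin Q) s i = Q.mulVec s i := fun i => rfl
  simp only [this]
  simp only [mul_comm (Q.mulVec _ _)]
  linarith

/-- Model decrease: if s is an approximate stationary point of the regularized model,
then m(0) - m(s) ≥ (a/2 - τ)‖s‖², which is positive when s ≠ 0. -/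
theorem model_decrease {n : ℕ}
    (Q : Matrix (Fin n) (Fin n) ℝ) (hsymm : Q.IsSymm) (a : ℝ) (ha : 0 < a)
    (hQa : (Q - a • 1).PosSemidef)
    (g s : EuclideanSpace ℝ (Fin n)) (σ r τ : ℝ)
    (hσ : 0 ≤ σ) (hr : 3 ≤ r) (hτ : 0 ≤ τ) (haτ : 2 * τ < a)
    (m : EuclideanSpace ℝ (Fin n) → ℝ)
    (hm : ∀ t : EuclideanSpace ℝ (Fin n),
      m t = ⟪g, t⟫ + (1 / 2) * ⟪t, Matrix.toEuclideanLin Q t⟫ + (σ / r) * ‖t‖ ^ r)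
    (hgrad : ‖g + Matrix.toEuclideanLin Q s + (σ * ‖s‖ ^ (r - 2)) • s‖ ≤ τ * ‖s‖) :
    (a / 2 - τ) * ‖s‖ ^ 2 ≤ m 0 - m s ∧ (s ≠ 0 → 0 < (a / 2 - τ) * ‖s‖ ^ 2) := by
  have hr0 : (0:ℝ) < r := by linarith
  have hm0 : m 0 = 0 := by
    rw [hm 0]
    simp [Real.zero_rpow hr0.ne']
  rcases eq_or_ne s 0 with rfl | hs
  · constructor
    · simp [hm0]
    · intro h; exact absurd rfl h
  · have hns : 0 < ‖s‖ := norm_pos_iff.mpr hs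
    -- key inner product bounds
    have hQs : a * ‖s‖^2 ≤ ⟪s, Matrix.toEuclideanLin Q s⟫ := quad_lower Q a hQa s
    have hrpow : ‖s‖ ^ (r - 2) * ‖s‖ ^ 2 = ‖s‖ ^ r := by
      rw [show ‖s‖ ^ 2 = ‖s‖ ^ ((2:ℕ):ℝ) from (Real.rpow_natCast _ 2).symm,
        ← Real.rpow_add hns]
      norm_num
    have hinner : ⟪g + Matrix.toEuclideanLin Q s + (σ * ‖s‖ ^ (r - 2)) • s, s⟫
        ≤ τ * ‖s‖^2 := by
      calc ⟪g + Matrix.toEuclideanLin Q s + (σ * ‖s‖ ^ (r - 2)) • s, s⟫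
          ≤ ‖g + Matrix.toEuclideanLin Q s + (σ * ‖s‖ ^ (r - 2)) • s‖ * ‖s‖ :=
            real_inner_le_norm _ _
        _ ≤ (τ * ‖s‖) * ‖s‖ := by
            exact mul_le_mul_of_nonneg_right hgrad (norm_nonneg s)
        _ = τ * ‖s‖^2 := by ring
    have hexp : ⟪g + Matrix.toEuclideanLin Q s + (σ * ‖s‖ ^ (r - 2)) • s, s⟫
        = ⟪g, s⟫ + ⟪s, Matrix.toEuclideanLin Q s⟫ + σ * ‖s‖ ^ r := by
      rw [inner_add_left, inner_add_left, real_inner_smul_left,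
        real_inner_comm (Matrix.toEuclideanLin Q s) s,
        real_inner_self_eq_norm_sq]
      rw [mul_assoc, hrpow]
    have hg : ⟪g, s⟫ ≤ τ * ‖s‖^2 - ⟪s, Matrix.toEuclideanLin Q s⟫ - σ * ‖s‖ ^ r := by
      rw [hexp] at hinner; linarith
    have hrnn : 0 ≤ ‖s‖ ^ r := Real.rpow_nonneg (norm_nonneg s) r
    have hreg : (σ / r) * ‖s‖ ^ r ≤ σ * ‖s‖ ^ r := by
      apply mul_le_mul_of_nonneg_right _ hrnn
      rw [div_le_iff₀ hr0]
      nlinarith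
    have hpos : 0 < (a / 2 - τ) * ‖s‖ ^ 2 := by
      apply mul_pos (by linarith) (by positivity)
    refine ⟨?_, fun _ => hpos⟩
    rw [hm0, hm s]
    nlinarith [hQs, hg, hreg]
end

section
/- Let f: R^n → R be continuously differentiable with L-Lipschitz gradient, Q a symmetric matrix with Q ⪰ aI, σ ≥ 0, r ≥ 3, η ∈ (0,1), τ ≥ 0, and suppose a ≥ 2τ + L/(1-η). Let x ∈ R^n and let s satisfy ‖∇f(x) + Qs + σ‖s‖^{r-2}s‖ ≤ τ‖s‖·min{‖s‖,1}. Define m(s) = f(x) + ∇f(x)ᵀs + (1/2)sᵀQs + (σ/r)‖s‖^r. Then f(x) - f(x+s) ≥ η·(m(0) - m(s)). -/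
open scoped RealInnerProductSpace

set_option maxHeartbeats 2000000 in
/-- Under L-Lipschitz gradient and a ≥ 2τ + L/(1-η), every approximately stationary
step of the regularized model achieves the sufficient decrease condition. -/
theorem sufficient_decrease {n : ℕ}
    (f : EuclideanSpace ℝ (Fin n) → ℝ) (hf : ContDiff ℝ 1 f)
    (L : ℝ) (hL : 0 < L)
    (hlip : ∀ x y : EuclideanSpace ℝ (Fin n),
      ‖gradient f x - gradient f y‖ ≤ L * ‖x - y‖)
    (Q : Matrix (Fin n) (Fin n) ℝ) (hsymm : Q.IsSymm)
    (a σ r η τ : ℝ) (ha : 0 < a) (hQa : (Q - a • 1).PosSemidef)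
    (hσ : 0 ≤ σ) (hr : 3 ≤ r) (hη : η ∈ Set.Ioo (0 : ℝ) 1) (hτ : 0 ≤ τ)
    (haτ : 2 * τ + L / (1 - η) ≤ a)
    (x s : EuclideanSpace ℝ (Fin n))
    (hgrad : ‖gradient f x + Matrix.toEuclideanLin Q s + (σ * ‖s‖ ^ (r - 2)) • s‖ ≤
      τ * ‖s‖ * min ‖s‖ 1)
    (m : EuclideanSpace ℝ (Fin n) → ℝ)
    (hm : ∀ t, m t = f x + ⟪gradient f x, t⟫ +
      (1 / 2) * ⟪t, Matrix.toEuclideanLin Q t⟫ + (σ / r) * ‖t‖ ^ r) :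
    η * (m 0 - m s) ≤ f x - f (x + s) := by
  obtain ⟨hη0, hη1⟩ := hη
  have hr0 : (0:ℝ) < r := by linarith
  have hzr : (‖(0 : EuclideanSpace ℝ (Fin n))‖ : ℝ) ^ r = 0 := by
    simp [Real.zero_rpow hr0.ne']
  have hm0 : m 0 = f x := by
    simp [hm, norm_zero, Real.zero_rpow hr0.ne']
  by_cases hs0 : s = 0
  · subst hs0
    simp [hm0, add_zero]
  have hsn : 0 < ‖s‖ := norm_pos_iff.mpr hs0
  set g := gradient f x with hg
  -- quadratic form lower bound
  have hpsd : 0 ≤ ⟪s, Matrix.toEuclideanLin (Q - a • 1) s⟫ := by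
    have h := hQa.dotProduct_mulVec_nonneg (WithLp.ofLp s)
    simpa [Matrix.toEuclideanLin_apply, PiLp.inner_apply, dotProduct, star_trivial,
      Matrix.sub_mulVec, Matrix.smul_mulVec, Matrix.one_mulVec, mul_comm] using h
  have hone : Matrix.toEuclideanLin (a • (1 : Matrix (Fin n) (Fin n) ℝ)) s = a • s := by
    simp [map_smul, Matrix.toEuclideanLin_apply]
  have hQs : a * ‖s‖ ^ 2 ≤ ⟪s, Matrix.toEuclideanLin Q s⟫ := by
    have heq : Matrix.toEuclideanLin (Q - a • 1) s
        = Matrix.toEuclideanLin Q s - a • s := by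
      rw [map_sub, LinearMap.sub_apply, hone]
    rw [heq, inner_sub_right, real_inner_smul_right, real_inner_self_eq_norm_sq] at hpsd
    linarith
  -- rpow facts
  have hrpow : ‖s‖ ^ (r - 2) * ‖s‖ ^ (2:ℕ) = ‖s‖ ^ r := by
    rw [← Real.rpow_natCast ‖s‖ 2, ← Real.rpow_add hsn]
    norm_num
  have hrpow_nonneg : 0 ≤ ‖s‖ ^ r := Real.rpow_nonneg (norm_nonneg s) r
  -- stationarity bound
  have hvs : ⟪g + Matrix.toEuclideanLin Q s + (σ * ‖s‖ ^ (r - 2)) • s, s⟫ ≤ τ * ‖s‖ ^ 2 := by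
    have h1 := real_inner_le_norm (g + Matrix.toEuclideanLin Q s + (σ * ‖s‖ ^ (r - 2)) • s) s
    have h2 : min ‖s‖ 1 ≤ 1 := min_le_right _ _
    have h4 : τ * ‖s‖ * min ‖s‖ 1 ≤ τ * ‖s‖ := by
      nlinarith [mul_nonneg hτ hsn.le]
    have h5 : ‖g + Matrix.toEuclideanLin Q s + (σ * ‖s‖ ^ (r - 2)) • s‖ ≤ τ * ‖s‖ :=
      le_trans hgrad h4
    nlinarith [mul_le_mul_of_nonneg_right h5 (norm_nonneg s)]
  have hexp : ⟪g, s⟫ + ⟪s, Matrix.toEuclideanLin Q s⟫ + σ * ‖s‖ ^ r ≤ τ * ‖s‖ ^ 2 := by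
    have heq : ⟪g + Matrix.toEuclideanLin Q s + (σ * ‖s‖ ^ (r - 2)) • s, s⟫
        = ⟪g, s⟫ + ⟪s, Matrix.toEuclideanLin Q s⟫ + σ * ‖s‖ ^ r := by
      rw [inner_add_left, inner_add_left, real_inner_smul_left,
        real_inner_self_eq_norm_sq, real_inner_comm (Matrix.toEuclideanLin Q s) s]
      push_cast
      linear_combination σ * hrpow
    linarith [heq.ge.trans hvs]
  -- model decrease
  have hr_inv : σ / r * ‖s‖ ^ r ≤ σ * ‖s‖ ^ r := by
    have h1 : σ / r ≤ σ := by
      rw [div_le_iff₀ hr0]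
      nlinarith
    exact mul_le_mul_of_nonneg_right h1 hrpow_nonneg
  have hmd : (a / 2 - τ) * ‖s‖ ^ 2 ≤ m 0 - m s := by
    rw [hm0, hm s]
    have hid : (a / 2 - τ) * ‖s‖ ^ 2 = a * ‖s‖ ^ 2 / 2 - τ * ‖s‖ ^ 2 := by ring
    linarith [hexp, hQs, hr_inv, hid.le, hid.ge]
  -- descent lemma
  have hdiff := hf.differentiable one_ne_zero
  have hφ : ∀ t : ℝ, HasDerivAt (fun t : ℝ => f (x + t • s))
      ⟪gradient f (x + t • s), s⟫ t := by
    intro t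
    have hline : HasDerivAt (fun t : ℝ => x + t • s) s t := by
      simpa using ((hasDerivAt_id t).smul_const s).const_add x
    have hgr := (hdiff (x + t • s)).hasGradientAt
    have h := hgr.hasFDerivAt.comp_hasDerivAt t hline
    simp only [InnerProductSpace.toDual_apply_apply] at h
    exact h
  set ψ : ℝ → ℝ := fun t => f (x + t • s) - t * ⟪g, s⟫ - L * ‖s‖ ^ 2 * t ^ 2 / 2 with hψdef
  have hψd : ∀ t : ℝ, HasDerivAt ψ
      (⟪gradient f (x + t • s), s⟫ - ⟪g, s⟫ - L * ‖s‖ ^ 2 * t) t := by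
    intro t
    have h2 := ((hasDerivAt_pow 2 t).const_mul (L * ‖s‖ ^ 2)).div_const 2
    have h4 := ((hφ t).sub ((hasDerivAt_id t).mul_const ⟪g, s⟫)).sub h2
    have hval : ⟪gradient f (x + t • s), s⟫ - ⟪g, s⟫ - L * ‖s‖ ^ 2 * t
        = ⟪gradient f (x + t • s), s⟫ - 1 * ⟪g, s⟫
          - L * ‖s‖ ^ 2 * (((2 : ℕ) : ℝ) * t ^ (2 - 1)) / 2 := by
      push_cast
      ring
    rw [hval]
    exact h4
  have hderiv_nonpos : ∀ t ∈ Set.Ioo (0:ℝ) 1, deriv ψ t ≤ 0 := by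
    intro t ht
    rw [(hψd t).deriv]
    have hlb := hlip (x + t • s) x
    have hinner : ⟪gradient f (x + t • s) - g, s⟫ ≤ ‖gradient f (x + t • s) - g‖ * ‖s‖ :=
      real_inner_le_norm _ _
    have hnorm : ‖x + t • s - x‖ = t * ‖s‖ := by
      rw [add_sub_cancel_left, norm_smul, Real.norm_eq_abs, abs_of_pos ht.1]
    rw [hnorm] at hlb
    have hsub : ⟪gradient f (x + t • s) - g, s⟫ = ⟪gradient f (x + t • s), s⟫ - ⟪g, s⟫ :=
      inner_sub_left _ _ _
    nlinarith [ht.1.le, hsn, mul_le_mul_of_nonneg_right hlb (norm_nonneg s)]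
  have hψmono : ψ 1 ≤ ψ 0 := by
    have hcont : ContinuousOn ψ (Set.Icc 0 1) := fun t _ =>
      ((hψd t).continuousAt).continuousWithinAt
    have hdif : DifferentiableOn ℝ ψ (interior (Set.Icc (0:ℝ) 1)) := fun t _ =>
      (hψd t).differentiableAt.differentiableWithinAt
    exact antitoneOn_of_deriv_nonpos (convex_Icc 0 1) hcont hdif
      (by rwa [interior_Icc]) (Set.left_mem_Icc.mpr zero_le_one)
      (Set.right_mem_Icc.mpr zero_le_one) zero_le_one
  have hdesc : f (x + s) ≤ f x + ⟪g, s⟫ + L / 2 * ‖s‖ ^ 2 := by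
    have h0 : ψ 0 = f x := by simp [hψdef]
    have h1 : ψ 1 = f (x + s) - ⟪g, s⟫ - L * ‖s‖ ^ 2 / 2 := by simp [hψdef]
    rw [h0, h1] at hψmono
    linarith
  -- combine
  have hmodel_f : (a - L) / 2 * ‖s‖ ^ 2 ≤ m s - f (x + s) := by
    rw [hm s]
    have hσr : 0 ≤ σ / r * ‖s‖ ^ r := by positivity
    have hid : (a - L) / 2 * ‖s‖ ^ 2 = a * ‖s‖ ^ 2 / 2 - L / 2 * ‖s‖ ^ 2 := by ring
    linarith [hQs, hdesc, hσr, hid.le, hid.ge]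
  have h1η : 0 < 1 - η := by linarith
  have hkey : L / 2 ≤ (1 - η) * (a / 2 - τ) := by
    have h6 := (div_le_iff₀ h1η).mp (by linarith : L / (1 - η) ≤ a - 2 * τ)
    nlinarith [h6]
  have hsq : 0 ≤ ‖s‖ ^ 2 := sq_nonneg _
  have hsplit : f x - f (x + s) - η * (m 0 - m s)
      = (1 - η) * (m 0 - m s) + (m s - f (x + s)) := by
    rw [hm0]; ring
  have p1 := mul_le_mul_of_nonneg_left hmd h1η.le
  have p2 := mul_le_mul_of_nonneg_right hkey hsq
  have i3 : 0 ≤ a * ‖s‖ ^ 2 := mul_nonneg ha.le hsq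
  nlinarith [p1, p2, hmodel_f, hsplit, i3]
end

section
/- Let f: R^n → R be continuously differentiable, pseudoconvex, and possess a global minimizer. Consider a sequence {x_k} generated by a regularized method with model m_k(s) = f(x_k) + ∇f(x_k)ᵀs + (1/2)sᵀQ_k s + (σ_k/r)‖s‖^r, where r ≥ 3, 0 ≤ σ_k ≤ σ_max < ∞, steps s_k satisfy ‖∇m_k(s_k)‖ ≤ τ‖s_k‖·min{‖s_k‖,1}, the update satisfies: x_{k+1} ≠ x_k implies f(x_k) - f(x_{k+1}) ≥ η(m_k(0) - m_k(s_k)) > 0 and x_{k+1} = x_k + s_k, with η > 0. Assume the symmetric matrices Q_k satisfy Q_k ⪰ aI with a > 2τ and Q_{k+1} ⪯ (1+ψ_k)Q_k with {ψ_k} nonnegative and summable. Then {x_k} is variable metric quasi-Fejér monotone with respect to F := {x : f(x) ≤ lim_k f(x_k)} relative to {Q_k}. -/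
open scoped RealInnerProductSpace

lemma psd_inner_nonneg' {n : ℕ} {M : Matrix (Fin n) (Fin n) ℝ} (h : M.PosSemidef)
    (v : EuclideanSpace ℝ (Fin n)) : 0 ≤ ⟪v, Matrix.toEuclideanLin M v⟫ := by
  have := h.dotProduct_mulVec_nonneg ((WithLp.equiv 2 _) v)
  simpa [EuclideanSpace.inner_eq_star_dotProduct, Matrix.toEuclideanLin_apply, dotProduct_comm] using this

lemma symm_inner' {n : ℕ} {M : Matrix (Fin n) (Fin n) ℝ} (h : M.IsSymm)
    (u v : EuclideanSpace ℝ (Fin n)) :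
    ⟪u, Matrix.toEuclideanLin M v⟫ = ⟪Matrix.toEuclideanLin M u, v⟫ := by
  have hH : M.IsHermitian := by show M.conjTranspose = M; simpa using h.eq
  exact ((Matrix.isHermitian_iff_isSymmetric.mp hH) u v).symm

lemma toEuclideanLin_smul_one' {n : ℕ} (aa : ℝ) (v : EuclideanSpace ℝ (Fin n)) :
    Matrix.toEuclideanLin (aa • (1 : Matrix (Fin n) (Fin n) ℝ)) v = aa • v := by
  apply (WithLp.equiv 2 _).injective
  simp [Matrix.ofLp_toEuclideanLin_apply]

set_option maxHeartbeats 2000000 in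
/-- The sequence generated by the general regularized method is variable metric
quasi-Fejér monotone with respect to F = {x : f(x) ≤ lim_k f(x_k)} relative to {Q_k}. -/
theorem reg_method_var_metric_quasi_fejer {n : ℕ}
    (f : EuclideanSpace ℝ (Fin n) → ℝ) (hf : ContDiff ℝ 1 f)
    (hpseudo : ∀ x y : EuclideanSpace ℝ (Fin n),
      0 ≤ ⟪gradient f x, y - x⟫ → f x ≤ f y)
    (xmin : EuclideanSpace ℝ (Fin n)) (hmin : ∀ y, f xmin ≤ f y)
    (r τ η σmax a : ℝ) (hr : 3 ≤ r) (hτ : 0 ≤ τ) (hη : 0 < η) (hσmax : 0 ≤ σmax)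
    (haτ : 2 * τ < a)
    (x s : ℕ → EuclideanSpace ℝ (Fin n))
    (σ : ℕ → ℝ) (hσ : ∀ k, σ k ∈ Set.Icc (0 : ℝ) σmax)
    (Q : ℕ → Matrix (Fin n) (Fin n) ℝ)
    (hsymm : ∀ k, (Q k).IsSymm)
    (hQa : ∀ k, (Q k - a • 1).PosSemidef)
    (ψ : ℕ → ℝ) (hψ0 : ∀ k, 0 ≤ ψ k) (hψ : Summable ψ)
    (hQrel : ∀ k : ℕ, ((1 + ψ k) • Q k - Q (k + 1)).PosSemidef)
    (m : ℕ → EuclideanSpace ℝ (Fin n) → ℝ)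
    (hm : ∀ k t, m k t = f (x k) + ⟪gradient f (x k), t⟫ +
      (1 / 2) * ⟪t, Matrix.toEuclideanLin (Q k) t⟫ + (σ k / r) * ‖t‖ ^ r)
    (hgrad : ∀ k : ℕ,
      ‖gradient f (x k) + Matrix.toEuclideanLin (Q k) (s k) +
          (σ k * ‖s k‖ ^ (r - 2)) • s k‖ ≤ τ * ‖s k‖ * min ‖s k‖ 1)
    (hupdate : ∀ k : ℕ, x (k + 1) = x k + s k ∨ x (k + 1) = x k)
    (hdecr : ∀ k : ℕ, x (k + 1) ≠ x k →
      η * (m k 0 - m k (s k)) ≤ f (x k) - f (x (k + 1)) ∧ 0 < m k 0 - m k (s k))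
    (Lf : ℝ) (hLf : Filter.Tendsto (fun k => f (x k)) Filter.atTop (nhds Lf)) :
    ∃ ψ' ε' : ℕ → ℝ, (∀ k, 0 ≤ ψ' k) ∧ Summable ψ' ∧ (∀ k, 0 ≤ ε' k) ∧ Summable ε' ∧
      ∀ y : EuclideanSpace ℝ (Fin n), f y ≤ Lf → ∀ k : ℕ,
        ⟪x (k + 1) - y, Matrix.toEuclideanLin (Q (k + 1)) (x (k + 1) - y)⟫ ≤
          (1 + ψ' k) * ⟪x k - y, Matrix.toEuclideanLin (Q k) (x k - y)⟫ + ε' k := by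
  have ha : 0 < a := lt_of_le_of_lt (by linarith) haτ
  have hr0 : r ≠ 0 := by intro h; rw [h] at hr; linarith
  have hr1ne : r - 1 ≠ 0 := by intro h; nlinarith [hr]
  -- quadratic lower bound from Q k ⪰ a I
  have hquad : ∀ k (z : EuclideanSpace ℝ (Fin n)),
      a * ‖z‖ ^ 2 ≤ ⟪z, Matrix.toEuclideanLin (Q k) z⟫ := by
    intro k z
    have h0 := psd_inner_nonneg' (hQa k) z
    rw [map_sub, LinearMap.sub_apply, inner_sub_right, toEuclideanLin_smul_one',
      real_inner_smul_right, real_inner_self_eq_norm_sq] at h0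
    linarith
  have hrel : ∀ k (z : EuclideanSpace ℝ (Fin n)),
      ⟪z, Matrix.toEuclideanLin (Q (k+1)) z⟫ ≤
        (1 + ψ k) * ⟪z, Matrix.toEuclideanLin (Q k) z⟫ := by
    intro k z
    have h0 := psd_inner_nonneg' (hQrel k) z
    rw [map_sub, LinearMap.sub_apply, inner_sub_right, map_smul, LinearMap.smul_apply,
      real_inner_smul_right] at h0
    linarith
  have hsym : ∀ k (u v : EuclideanSpace ℝ (Fin n)),
      ⟪u, Matrix.toEuclideanLin (Q k) v⟫ = ⟪Matrix.toEuclideanLin (Q k) u, v⟫ :=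
    fun k => symm_inner' (hsymm k)
  obtain ⟨t, hts⟩ : ∃ t : ℕ → EuclideanSpace ℝ (Fin n),
      t = fun k => x (k+1) - x k := ⟨_, rfl⟩
  obtain ⟨d, hds⟩ : ∃ d : ℕ → ℝ,
      d = fun k => ⟪t k, Matrix.toEuclideanLin (Q k) (t k)⟫ := ⟨_, rfl⟩
  obtain ⟨c, hcs⟩ : ∃ c : ℕ → ℝ,
      c = fun k => 2*τ*‖t k‖^2 + 2*σ k*‖t k‖^(r-1) := ⟨_, rfl⟩
  have hd0 : ∀ k, 0 ≤ d k := by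
    intro k; simp only [hds]
    exact le_trans (by positivity) (hquad k (t k))
  have hc0 : ∀ k, 0 ≤ c k := by
    intro k; simp only [hcs]
    have h1 := (hσ k).1
    have h2 : (0:ℝ) ≤ ‖t k‖^(r-1) := Real.rpow_nonneg (norm_nonneg _) _
    have h3 : (0:ℝ) ≤ ‖t k‖^2 := by positivity
    nlinarith
  -- monotone decrease of f along the iterates
  have hmono : ∀ k, f (x (k+1)) ≤ f (x k) := by
    intro k
    by_cases heq : x (k+1) = x k
    · rw [heq]
    · obtain ⟨h1, h2⟩ := hdecr k heq; nlinarith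
  have hanti : Antitone (fun k => f (x k)) :=
    antitone_nat_of_succ_le hmono
  have hLfle : ∀ j, Lf ≤ f (x j) := by
    intro j
    exact le_of_tendsto hLf (Filter.eventually_atTop.mpr ⟨j, fun mm hmm => hanti hmm⟩)
  -- key decrease bound
  have hstep : ∀ k, η * ((1/2 - τ/a) * d k) ≤ f (x k) - f (x (k+1)) := by
    intro k
    by_cases heq : x (k+1) = x k
    · have ht0 : t k = 0 := by rw [hts]; simp [heq]
      have hdz : d k = 0 := by rw [hds]; simp [ht0]
      rw [hdz, heq]; simp
    · have hxs : x (k+1) = x k + s k := (hupdate k).resolve_right heq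
      have htk : t k = s k := by rw [hts]; simp [hxs]
      have hs0 : s k ≠ 0 := by
        intro h; exact heq (by rw [hxs, h, add_zero])
      have hsp : (0:ℝ) < ‖s k‖ := norm_pos_iff.mpr hs0
      obtain ⟨hd1, hd2⟩ := hdecr k heq
      obtain ⟨v, hv⟩ : ∃ v, v = gradient f (x k) := ⟨_, rfl⟩
      obtain ⟨e, he⟩ : ∃ e, e = gradient f (x k) + Matrix.toEuclideanLin (Q k) (s k) +
          (σ k * ‖s k‖ ^ (r - 2)) • s k := ⟨_, rfl⟩
      have hee : ‖e‖ ≤ τ * ‖s k‖ * min ‖s k‖ 1 := by rw [he]; exact hgrad k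
      have hm0 : m k 0 = f (x k) := by
        rw [hm k 0]
        simp [Real.zero_rpow hr0]
      have hp2 : ‖s k‖ ^ ((2:ℕ):ℝ) = ‖s k‖^2 := Real.rpow_natCast _ 2
      have hid2 : ‖s k‖^r = ‖s k‖^(r-2) * ‖s k‖^2 := by
        rw [← hp2, ← Real.rpow_add hsp]
        norm_num
      have hvs : ⟪v, s k⟫ = ⟪e, s k⟫ - ⟪s k, Matrix.toEuclideanLin (Q k) (s k)⟫ -
          σ k * ‖s k‖^(r-2) * ‖s k‖^2 := by
        have hveq : v = e - Matrix.toEuclideanLin (Q k) (s k) -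
            (σ k * ‖s k‖ ^ (r - 2)) • s k := by rw [he, hv]; abel
        rw [hveq, inner_sub_left, inner_sub_left, real_inner_smul_left,
          real_inner_comm (Matrix.toEuclideanLin (Q k) (s k)) (s k),
          real_inner_self_eq_norm_sq]
      have hgap : (1/2 - τ/a) * d k ≤ m k 0 - m k (s k) := by
        rw [hm0, hm k (s k), ← hv]; simp only [hds]; rw [htk]
        have hes : ⟪e, s k⟫ ≤ τ * ‖s k‖^2 := by
          have h1 := real_inner_le_norm e (s k)
          have h2 : min ‖s k‖ 1 ≤ 1 := min_le_right _ _
          have h3 : ‖e‖ * ‖s k‖ ≤ τ * ‖s k‖^2 := by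
            have hA := mul_le_mul_of_nonneg_right hee (norm_nonneg (s k))
            have hB := mul_le_mul_of_nonneg_left h2 (mul_nonneg hτ (norm_nonneg (s k)))
            have hC := mul_le_mul_of_nonneg_right hB (norm_nonneg (s k))
            nlinarith [hA, hC]
          linarith
        have hσk := (hσ k).1
        have hrp : (0:ℝ) ≤ ‖s k‖^r := Real.rpow_nonneg (norm_nonneg _) _
        have hσr : 0 ≤ (σ k - σ k / r) * ‖s k‖^r := by
          apply mul_nonneg _ hrp
          have : σ k / r ≤ σ k := div_le_self hσk (by linarith)
          linarith
        have hτa : τ * ‖s k‖^2 ≤ τ/a * ⟪s k, Matrix.toEuclideanLin (Q k) (s k)⟫ := by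
          have h7 := mul_le_mul_of_nonneg_left (hquad k (s k)) (div_nonneg hτ ha.le)
          have h8 : τ/a * (a * ‖s k‖^2) = τ * ‖s k‖^2 := by
            field_simp
          linarith
        rw [hid2] at hσr
        rw [hvs, hid2]
        linarith [hσr, hes, hτa]
      calc η * ((1/2 - τ/a) * d k) ≤ η * (m k 0 - m k (s k)) :=
            mul_le_mul_of_nonneg_left hgap hη.le
        _ ≤ f (x k) - f (x (k+1)) := hd1
  have hκ : 0 < η * (1/2 - τ/a) := by
    have : τ / a < 1/2 := by rw [div_lt_iff₀ ha]; linarith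
    have h2 : 0 < 1/2 - τ/a := by linarith
    positivity
  have hdsum : Summable d := by
    apply summable_of_sum_range_le hd0 (c := (f (x 0) - f xmin) / (η * (1/2 - τ/a)))
    intro N
    rw [le_div_iff₀ hκ]
    have htel : ∑ k ∈ Finset.range N, (f (x k) - f (x (k+1))) = f (x 0) - f (x N) :=
      Finset.sum_range_sub' (fun k => f (x k)) N
    have hsum_le : ∑ k ∈ Finset.range N, (η * ((1/2 - τ/a) * d k)) ≤ f (x 0) - f (x N) := by
      rw [← htel]; exact Finset.sum_le_sum fun k _ => hstep k
    have hxm : f xmin ≤ f (x N) := hmin _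
    calc (∑ k ∈ Finset.range N, d k) * (η * (1/2 - τ/a))
        = ∑ k ∈ Finset.range N, (η * ((1/2 - τ/a) * d k)) := by
          rw [Finset.sum_mul]; apply Finset.sum_congr rfl; intros; ring
      _ ≤ f (x 0) - f (x N) := hsum_le
      _ ≤ f (x 0) - f xmin := by linarith
  -- norms squared summable, bounded
  have ht2 : ∀ k, ‖t k‖^2 ≤ d k / a := by
    intro k; rw [le_div_iff₀ ha]
    have h := hquad k (t k)
    simp only [hds]
    linarith
  have ht2sum : Summable (fun k => ‖t k‖^2) :=
    Summable.of_nonneg_of_le (fun k => by positivity) ht2 (hdsum.div_const a)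
  obtain ⟨D, hD⟩ : ∃ D : ℝ, D = ∑' k, d k := ⟨_, rfl⟩
  have hdD : ∀ k, d k ≤ D := by
    intro k; rw [hD]; exact Summable.le_tsum hdsum k (fun j _ => hd0 j)
  obtain ⟨M, hM⟩ : ∃ M : ℝ, M = Real.sqrt (D / a) := ⟨_, rfl⟩
  have htM : ∀ k, ‖t k‖ ≤ M := by
    intro k
    have h1 : ‖t k‖^2 ≤ D / a := le_trans (ht2 k) (by gcongr; exact hdD k)
    rw [hM, ← Real.sqrt_sq (norm_nonneg (t k))]
    exact Real.sqrt_le_sqrt h1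
  obtain ⟨K, hKs⟩ : ∃ K : ℝ, K = (max M 1) ^ (r - 3) := ⟨_, rfl⟩
  have hK0 : 0 ≤ K := hKs ▸ Real.rpow_nonneg (le_trans zero_le_one (le_max_right _ _)) _
  have hr1 : ∀ k, ‖t k‖^(r-1) ≤ K * ‖t k‖^2 := by
    intro k
    rcases eq_or_lt_of_le (norm_nonneg (t k)) with h0 | h0
    · rw [← h0, Real.zero_rpow hr1ne]
      positivity
    · have hp2 : ‖t k‖ ^ ((2:ℕ):ℝ) = ‖t k‖^2 := Real.rpow_natCast _ 2
      have e1 : ‖t k‖ ^ (r-1) = ‖t k‖ ^ (r-3) * ‖t k‖^2 := by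
        rw [show r-1 = (r-3)+((2:ℕ):ℝ) by push_cast; ring, Real.rpow_add h0, hp2]
      rw [e1, hKs]
      apply mul_le_mul_of_nonneg_right _ (by positivity)
      exact Real.rpow_le_rpow (norm_nonneg _) ((htM k).trans (le_max_left M 1))
        (by linarith)
  have hc_le : ∀ k, c k ≤ (2*τ + 2*σmax*K) * ‖t k‖^2 := by
    intro k; simp only [hcs]
    have h1 := (hσ k).1
    have h2 := (hσ k).2
    have h3 := hr1 k
    have h4 : (0:ℝ) ≤ ‖t k‖^2 := by positivity
    have h5 : (0:ℝ) ≤ ‖t k‖^(r-1) := Real.rpow_nonneg (norm_nonneg _) _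
    have h6 : σ k * ‖t k‖^(r-1) ≤ σ k * (K * ‖t k‖^2) :=
      mul_le_mul_of_nonneg_left h3 h1
    have h7 : σ k * (K * ‖t k‖^2) ≤ σmax * (K * ‖t k‖^2) :=
      mul_le_mul_of_nonneg_right h2 (mul_nonneg hK0 h4)
    nlinarith
  have hcsum : Summable c :=
    Summable.of_nonneg_of_le hc0 hc_le (ht2sum.mul_left _)
  obtain ⟨Sψ, hSψ⟩ : ∃ S : ℝ, S = ∑' k, ψ k := ⟨_, rfl⟩
  have hψD : ∀ k, ψ k ≤ Sψ := by
    intro k; rw [hSψ]; exact Summable.le_tsum hψ k (fun j _ => hψ0 j)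
  have hSψ0 : 0 ≤ Sψ := le_trans (hψ0 0) (hψD 0)
  have hca : ∀ k, 0 ≤ c k / (2*a) := fun k => div_nonneg (hc0 k) (by positivity)
  refine ⟨fun k => ψ k + (1 + ψ k) * (c k / (2*a)), fun k => (1 + ψ k) * (c k / 2 + d k),
    ?_, ?_, ?_, ?_, ?_⟩
  · intro k
    have h1 := hψ0 k
    have h2 := mul_nonneg (by linarith : (0:ℝ) ≤ 1 + ψ k) (hca k)
    exact add_nonneg h1 h2
  · apply Summable.of_nonneg_of_le (f := fun k => ψ k + (1+Sψ) * (c k / (2*a)))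
    · intro k
      have h1 := hψ0 k
      have h2 := mul_nonneg (by linarith : (0:ℝ) ≤ 1 + ψ k) (hca k)
      exact add_nonneg h1 h2
    · intro k
      have h1 := hψD k
      have h2 := mul_le_mul_of_nonneg_right (by linarith : (1:ℝ) + ψ k ≤ 1 + Sψ) (hca k)
      exact add_le_add le_rfl h2
    · exact hψ.add (((hcsum.div_const (2*a)).mul_left (1+Sψ)))
  · intro k
    have h1 := hψ0 k; have h2 := hc0 k; have h3 := hd0 k
    exact mul_nonneg (by linarith) (add_nonneg (div_nonneg h2 two_pos.le) h3)
  · apply Summable.of_nonneg_of_le (f := fun k => (1+Sψ) * (c k / 2 + d k))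
    · intro k
      have h1 := hψ0 k; have h2 := hc0 k; have h3 := hd0 k
      exact mul_nonneg (by linarith) (add_nonneg (div_nonneg h2 two_pos.le) h3)
    · intro k
      have h1 := hψD k; have h2 := hc0 k; have h3 := hd0 k
      exact mul_le_mul_of_nonneg_right (add_le_add_right h1 1)
        (add_nonneg (div_nonneg h2 two_pos.le) h3)
    · exact ((hcsum.div_const 2).add hdsum).mul_left (1+Sψ)
  · intro y hy k
    have hB : ⟪x (k+1) - y, Matrix.toEuclideanLin (Q k) (x (k+1) - y)⟫ ≤
        (1 + c k / (2*a)) * ⟪x k - y, Matrix.toEuclideanLin (Q k) (x k - y)⟫ +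
          (c k / 2 + d k) := by
      have hLuu : 0 ≤ ⟪x k - y, Matrix.toEuclideanLin (Q k) (x k - y)⟫ :=
        le_trans (by positivity) (hquad k _)
      by_cases heq : x (k+1) = x k
      · have ht0 : t k = 0 := by rw [hts]; simp [heq]
        have hdz : d k = 0 := by rw [hds]; simp [ht0]
        have hcz : c k = 0 := by rw [hcs]; simp [ht0, Real.zero_rpow hr1ne]
        rw [heq, hdz, hcz]
        norm_num
      · have hxs : x (k+1) = x k + s k := (hupdate k).resolve_right heq
        have htk : t k = s k := by rw [hts]; simp [hxs]
        have hs0 : s k ≠ 0 := by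
          intro h; exact heq (by rw [hxs, h, add_zero])
        have hsp : (0:ℝ) < ‖s k‖ := norm_pos_iff.mpr hs0
        obtain ⟨v, hv⟩ : ∃ v, v = gradient f (x k) := ⟨_, rfl⟩
        obtain ⟨e, he⟩ : ∃ e, e = gradient f (x k) + Matrix.toEuclideanLin (Q k) (s k) +
            (σ k * ‖s k‖ ^ (r - 2)) • s k := ⟨_, rfl⟩
        have hee : ‖e‖ ≤ τ * ‖s k‖ * min ‖s k‖ 1 := by rw [he]; exact hgrad k
        obtain ⟨u, hu⟩ : ∃ u, u = x k - y := ⟨_, rfl⟩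
        have hzu : x (k+1) - y = u + s k := by rw [hu, hxs]; abel
        -- pseudoconvexity gives sign on ⟪v, u⟫
        have hfd : f (x (k+1)) < f (x k) := by
          obtain ⟨h1, h2⟩ := hdecr k heq; nlinarith
        have hvy : 0 ≤ ⟪v, u⟫ := by
          by_contra hneg
          push_neg at hneg
          have hyx : (0:ℝ) ≤ ⟪gradient f (x k), y - x k⟫ := by
            have hyu : y - x k = -u := by rw [hu]; abel
            rw [hyu, inner_neg_right, ← hv]
            linarith
          have := hpseudo (x k) y hyx
          have h9 := hLfle (k+1)
          linarith
        -- expansion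
        have h1 : ⟪u, Matrix.toEuclideanLin (Q k) (s k)⟫ =
            ⟪s k, Matrix.toEuclideanLin (Q k) u⟫ := by
          rw [hsym k u (s k)]; exact real_inner_comm _ _
        have hexp : ⟪x (k+1) - y, Matrix.toEuclideanLin (Q k) (x (k+1) - y)⟫ =
            ⟪u, Matrix.toEuclideanLin (Q k) u⟫ +
              2 * ⟪s k, Matrix.toEuclideanLin (Q k) u⟫ +
              ⟪s k, Matrix.toEuclideanLin (Q k) (s k)⟫ := by
          rw [hzu, map_add, inner_add_left, inner_add_right, inner_add_right, h1]
          ring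
        -- cross term bound
        have hLs : Matrix.toEuclideanLin (Q k) (s k) = e - v -
            (σ k * ‖s k‖ ^ (r - 2)) • s k := by rw [he, hv]; abel
        have hcross : ⟪s k, Matrix.toEuclideanLin (Q k) u⟫ =
            ⟪e, u⟫ - ⟪v, u⟫ - (σ k * ‖s k‖^(r-2)) * ⟪s k, u⟫ := by
          rw [hsym k (s k) u, hLs, inner_sub_left, inner_sub_left, real_inner_smul_left]
        have hσk := (hσ k).1
        have hrp2 : (0:ℝ) ≤ ‖s k‖^(r-2) := Real.rpow_nonneg (norm_nonneg _) _
        have hid : ‖s k‖^(r-1) = ‖s k‖^(r-2) * ‖s k‖ := by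
          rw [show r-1 = (r-2)+1 by ring, Real.rpow_add hsp, Real.rpow_one]
        have heu : ⟪e, u⟫ ≤ τ * ‖s k‖^2 * ‖u‖ := by
          have ha1 := real_inner_le_norm e u
          have ha2 : min ‖s k‖ 1 ≤ ‖s k‖ := min_le_left _ _
          have ha3 : ‖e‖ * ‖u‖ ≤ τ * ‖s k‖^2 * ‖u‖ := by
            apply mul_le_mul_of_nonneg_right _ (norm_nonneg u)
            have hB := mul_le_mul_of_nonneg_left ha2 (mul_nonneg hτ (norm_nonneg (s k)))
            nlinarith [hee, hB]
          linarith
        have h5 : -⟪s k, u⟫ ≤ ‖s k‖ * ‖u‖ := by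
          have := abs_real_inner_le_norm (s k) u
          have := abs_le.mp this
          linarith [this.1]
        have h4 : -((σ k * ‖s k‖^(r-2)) * ⟪s k, u⟫) ≤ σ k * ‖s k‖^(r-1) * ‖u‖ := by
          rw [hid]
          calc -((σ k * ‖s k‖^(r-2)) * ⟪s k, u⟫)
              = (σ k * ‖s k‖^(r-2)) * (-⟪s k, u⟫) := by ring
            _ ≤ (σ k * ‖s k‖^(r-2)) * (‖s k‖ * ‖u‖) :=
                mul_le_mul_of_nonneg_left h5 (mul_nonneg hσk hrp2)
            _ = σ k * (‖s k‖^(r-2) * ‖s k‖) * ‖u‖ := by ring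
        have hcross_le : 2 * ⟪s k, Matrix.toEuclideanLin (Q k) u⟫ ≤ c k * ‖u‖ := by
          rw [hcross]; simp only [hcs]; rw [htk]
          have expand : (2*τ*‖s k‖^2 + 2*σ k*‖s k‖^(r-1)) * ‖u‖ =
              2*(τ*‖s k‖^2*‖u‖) + 2*(σ k*‖s k‖^(r-1)*‖u‖) := by ring
          rw [expand]
          linarith
        -- Young + quadratic lower bound
        have hyoung : c k * ‖u‖ ≤ c k/2 * ‖u‖^2 + c k/2 := by
          have h6 := hc0 k
          nlinarith [sq_nonneg (‖u‖ - 1)]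
        have hconv : c k/2 * ‖u‖^2 ≤
            c k/(2*a) * ⟪u, Matrix.toEuclideanLin (Q k) u⟫ := by
          have h7 := mul_le_mul_of_nonneg_left (hquad k u) (hca k)
          have h8 : c k / (2*a) * (a * ‖u‖^2) = c k / 2 * ‖u‖^2 := by
            field_simp
          linarith
        have hdd : d k = ⟪s k, Matrix.toEuclideanLin (Q k) (s k)⟫ := by
          simp only [hds]; rw [htk]
        rw [hexp, ← hu, ← hdd]
        linarith
    have hA := hrel k (x (k+1) - y)
    have hLuu : 0 ≤ ⟪x k - y, Matrix.toEuclideanLin (Q k) (x k - y)⟫ :=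
      le_trans (by positivity) (hquad k _)
    have hψk := hψ0 k
    have hck : 0 ≤ c k / (2*a) := hca k
    calc ⟪x (k+1) - y, Matrix.toEuclideanLin (Q (k+1)) (x (k+1) - y)⟫
        ≤ (1 + ψ k) * ⟪x (k+1) - y, Matrix.toEuclideanLin (Q k) (x (k+1) - y)⟫ := hA
      _ ≤ (1 + ψ k) * ((1 + c k / (2*a)) *
          ⟪x k - y, Matrix.toEuclideanLin (Q k) (x k - y)⟫ + (c k / 2 + d k)) := by
          apply mul_le_mul_of_nonneg_left hB; linarith
      _ = (1 + (ψ k + (1 + ψ k) * (c k / (2*a)))) *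
          ⟪x k - y, Matrix.toEuclideanLin (Q k) (x k - y)⟫ +
          (1 + ψ k) * (c k / 2 + d k) := by ring
end
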